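/- Let (S,T) be a medium and let S and V be two distinct states with Sm = V for some concise message m. Then V̂ \ Ŝ = C(m), where Ŝ, V̂ are the contents of S and V and C(m) is the content of the message m. -/

import Mathlib

open scoped Classical symmDiff

universe u

namespace Media

variable {S : Type u}

/-- The state obtained by applying the message (string of tokens) `m` to the state `s`. -/
def apply (s : S) (m : List (S → S)) : S :=
  m.foldl (fun x τ => τ x) s

/-- The sequence of states `S₀ = s, S₁, …, Sₙ` produced by the message `m` from the state `s`. -/
def produced (s : S) (m : List (S → S)) : List S :=
  m.scanl (fun x τ => τ x) s

/-- `τ'` is a reverse of the token `τ`. -/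
def IsReverse (τ τ' : S → S) : Prop :=
  ∀ P Q : S, P ≠ Q → (τ P = Q ↔ τ' Q = P)

/-- The message `m` is stepwise effective for the state `s`. -/
def StepwiseEffective (s : S) (m : List (S → S)) : Prop :=
  List.Chain' (· ≠ ·) (produced s m)

/-- The message `m` is consistent: it does not contain both a token and its reverse. -/
def Consistent (m : List (S → S)) : Prop :=
  ∀ τ ∈ m, ∀ τ' ∈ m, ¬ IsReverse τ τ'

/-- The message `m` is concise for the state `s`. -/
def Concise (s : S) (m : List (S → S)) : Prop :=
  StepwiseEffective s m ∧ Consistent m ∧ m.Nodup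

/-- The message `m` is vacuous: its indices can be partitioned into pairs of
mutually reverse tokens. -/
def Vacuous (m : List (S → S)) : Prop :=
  ∃ f : Fin m.length → Fin m.length, Function.Involutive f ∧
    (∀ i, f i ≠ i) ∧ ∀ i, IsReverse (m.get i) (m.get (f i))

/-- The message `m` is closed for the state `s`. -/
def Closed (s : S) (m : List (S → S)) : Prop :=
  StepwiseEffective s m ∧ apply s m = s

/-- `(S, T)` is a medium: a token system satisfying axioms [M1] and [M2]. -/
def IsMedium (T : Set (S → S)) : Prop :=
  (∃ a b : S, a ≠ b) ∧ T.Nonempty ∧ (∀ τ ∈ T, τ ≠ id) ∧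
  (∀ P Q : S, P ≠ Q →
    ∃ m : List (S → S), (∀ τ ∈ m, τ ∈ T) ∧ Concise P m ∧ apply P m = Q) ∧
  (∀ (P : S) (m : List (S → S)), (∀ τ ∈ m, τ ∈ T) → Closed P m → Vacuous m)

end Media

namespace Media

variable {S : Type u}

/-- The content of a state: all tokens occurring in at least one concise message
producing that state. -/
def stateContent (T : Set (S → S)) (s : S) : Set (S → S) :=
  {τ | ∃ (W : S) (m : List (S → S)),
    (∀ σ ∈ m, σ ∈ T) ∧ Concise W m ∧ apply W m = s ∧ τ ∈ m}

end Media

open Media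

/-!
A token occurring in a closed stepwise effective message is matched, occurrence by occurrence,
by its reverse ([M2]). If `τ ∈ C(m)` also lay in `ŝ`, say via a concise `n` from `w` to `s`,
close `n m` into a loop by a concise message from `v` back to `w`: `τ` occurs twice, while
its reverse can occur neither in `n` nor in `m` (consistency) nor twice in the closing message.
Conversely, for `τ ∈ v̂` occurring in a concise `p` from `u` to `v`, the loop formed by a concise
message from `u` to `s`, then `m`, then `p` reversed token by token contains `τ̃`, hence `τ`;
the reversed `p` cannot contain `τ` since `p` is consistent, so `τ ∈ ŝ` or `τ ∈ C(m)`.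
-/

namespace Media

variable {S : Type u} {T : Set (S → S)} {s : S} {τ σ ρ : S → S} {m n : List (S → S)}

@[simp]
theorem apply_nil (s : S) : apply s [] = s := rfl

@[simp]
theorem apply_cons (s : S) (τ : S → S) (m : List (S → S)) : apply s (τ :: m) = apply (τ s) m :=
  rfl

@[simp]
theorem apply_append (s : S) (m n : List (S → S)) : apply s (m ++ n) = apply (apply s m) n :=
  List.foldl_append

theorem stepwiseEffective_nil (s : S) : StepwiseEffective s [] :=
  List.isChain_singleton s

theorem stepwiseEffective_cons :
    StepwiseEffective s (τ :: m) ↔ τ s ≠ s ∧ StepwiseEffective (τ s) m := by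
  have hhead : (produced (τ s) m).head? = some (τ s) := by cases m <;> simp [produced]
  change List.IsChain _ _ ↔ _ ∧ List.IsChain _ _
  rw [show produced s (τ :: m) = s :: produced (τ s) m from
    List.scanl_cons, List.isChain_cons, hhead]
  simp [ne_comm]

theorem stepwiseEffective_append :
    StepwiseEffective s (m ++ n) ↔ StepwiseEffective s m ∧ StepwiseEffective (apply s m) n := by
  induction m generalizing s with
  | nil => simp [stepwiseEffective_nil]
  | cons τ t ih => simp only [List.cons_append, stepwiseEffective_cons, apply_cons, ih, and_assoc]

theorem concise_nil (s : S) : Concise s [] :=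
  ⟨stepwiseEffective_nil s, by simp [Consistent], List.nodup_nil⟩

namespace IsReverse

theorem symm (h : IsReverse τ σ) : IsReverse σ τ :=
  fun P Q hPQ => (h Q P hPQ.symm).symm

theorem apply_apply (h : IsReverse τ σ) {P : S} (hP : τ P ≠ P) : σ (τ P) = P :=
  (h P (τ P) hP.symm).mp rfl

theorem unique (h : IsReverse τ σ) (h' : IsReverse τ ρ) : σ = ρ := by
  funext Q
  by_cases hσ : σ Q = Q
  · by_cases hρ : ρ Q = Q
    · rw [hσ, hρ]
    · exact (h (ρ Q) Q hρ).mp ((h' (ρ Q) Q hρ).mpr rfl)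
  · exact ((h' (σ Q) Q hσ).mp ((h (σ Q) Q hσ).mpr rfl)).symm

end IsReverse

namespace Vacuous

theorem exists_isReverse_mem (hv : Vacuous m) (hτ : τ ∈ m) : ∃ σ ∈ m, IsReverse τ σ := by
  obtain ⟨f, -, -, hrev⟩ := hv
  obtain ⟨i, rfl⟩ := List.get_of_mem hτ
  exact ⟨m.get (f i), m.get_mem _, hrev i⟩

/-- The pairing of a vacuous message maps the occurrences of `τ` injectively to occurrences
of `ρ`. -/
theorem count_le_count (hv : Vacuous m) (h : IsReverse τ ρ) : m.count τ ≤ m.count ρ := by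
  obtain ⟨f, hf, -, hrev⟩ := hv
  have hcount (a : S → S) : (Finset.univ.filter fun i => m.get i = a).card = m.count a :=
    Fin.card_filter_univ_eq_vector_get_eq_count a ⟨m, rfl⟩
  rw [← hcount τ, ← hcount ρ]
  refine Finset.card_le_card_of_injOn f (fun i hi => ?_) hf.injective.injOn
  simp only [Finset.coe_filter, Finset.mem_univ, true_and, Set.mem_ofPred_eq] at hi ⊢
  exact (hi ▸ hrev i).unique h

theorem mem_of_isReverse (hv : Vacuous m) (h : IsReverse τ ρ) (hτ : τ ∈ m) : ρ ∈ m :=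
  List.count_pos_iff.1 ((List.count_pos_iff.2 hτ).trans_le (hv.count_le_count h))

end Vacuous

theorem StepwiseEffective.reverse_map {r : (S → S) → S → S} (hm : StepwiseEffective s m)
    (hr : ∀ τ ∈ m, IsReverse τ (r τ)) :
    StepwiseEffective (apply s m) (m.map r).reverse ∧ apply (apply s m) (m.map r).reverse = s := by
  induction m generalizing s with
  | nil => exact ⟨stepwiseEffective_nil s, rfl⟩
  | cons τ t ih =>
    obtain ⟨hτs, ht⟩ := stepwiseEffective_cons.1 hm
    obtain ⟨ih₁, ih₂⟩ := ih ht fun σ hσ => hr σ (List.mem_cons_of_mem τ hσ)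
    have hback : r τ (τ s) = s := (hr τ List.mem_cons_self).apply_apply hτs
    refine ⟨?_, by simp [ih₂, hback]⟩
    rw [List.map_cons, List.reverse_cons, stepwiseEffective_append, apply_cons, ih₂,
      stepwiseEffective_cons, hback]
    exact ⟨ih₁, hτs.symm, stepwiseEffective_nil s⟩

namespace IsMedium

theorem exists_concise (hM : IsMedium T) (P Q : S) :
    ∃ m : List (S → S), (∀ τ ∈ m, τ ∈ T) ∧ Concise P m ∧ apply P m = Q := by
  by_cases hPQ : P = Q
  · exact ⟨[], by simp, concise_nil P, hPQ⟩
  · exact hM.2.2.2.1 P Q hPQ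

theorem vacuous (hM : IsMedium T) (hmT : ∀ τ ∈ m, τ ∈ T) (hm : Closed s m) : Vacuous m :=
  hM.2.2.2.2 s m hmT hm

theorem exists_isReverse (hM : IsMedium T) (hτ : τ ∈ T) : ∃ σ ∈ T, IsReverse τ σ := by
  obtain ⟨P, hP⟩ : ∃ P, τ P ≠ P := by
    by_contra! h
    exact hM.2.2.1 τ hτ (funext h)
  obtain ⟨r, hrT, hrc, hra⟩ := hM.2.2.2.1 (τ P) P hP
  have hT : ∀ σ ∈ τ :: r, σ ∈ T := List.forall_mem_cons.2 ⟨hτ, hrT⟩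
  have hclosed : Closed P (τ :: r) := ⟨stepwiseEffective_cons.2 ⟨hP, hrc.1⟩, hra⟩
  obtain ⟨σ, hσ, hrev⟩ := (hM.vacuous hT hclosed).exists_isReverse_mem List.mem_cons_self
  exact ⟨σ, hT σ hσ, hrev⟩

theorem notMem_stateContent_of_mem (hM : IsMedium T) (hmT : ∀ τ ∈ m, τ ∈ T)
    (hm : Concise s m) (hτ : τ ∈ m) : τ ∉ stateContent T s := by
  rintro ⟨w, n, hnT, hn, rfl, hτn⟩
  obtain ⟨p, hpT, hp, hpa⟩ := hM.exists_concise (apply (apply w n) m) w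
  obtain ⟨ρ, -, hρ⟩ := hM.exists_isReverse (hnT τ hτn)
  have hclosed : Closed w (n ++ m ++ p) :=
    ⟨by simp [stepwiseEffective_append, hn.1, hm.1, hp.1], by simp [hpa]⟩
  have hvac := hM.vacuous (by grind) hclosed
  have hρn : n.count ρ = 0 := List.count_eq_zero.2 fun h => hn.2.1 τ hτn ρ h hρ
  have hρm : m.count ρ = 0 := List.count_eq_zero.2 fun h => hm.2.1 τ hτ ρ h hρ
  have hτn_pos := List.count_pos_iff.2 hτn
  have hτm_pos := List.count_pos_iff.2 hτ
  have hρp := List.nodup_iff_count_le_one.1 hp.2.2 ρ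
  have := hvac.count_le_count hρ
  simp only [List.count_append] at this
  omega

theorem mem_stateContent_or_mem (hM : IsMedium T) (hmT : ∀ τ ∈ m, τ ∈ T)
    (hm : StepwiseEffective s m) (hτ : τ ∈ stateContent T (apply s m)) :
    τ ∈ stateContent T s ∨ τ ∈ m := by
  obtain ⟨u, p, hpT, hp, hpa, hτp⟩ := hτ
  choose! r hrT hr using fun σ (hσ : σ ∈ T) => hM.exists_isReverse hσ
  obtain ⟨q, hqT, hq, hqa⟩ := hM.exists_concise u s
  obtain ⟨hp', hp'a⟩ := hp.1.reverse_map fun σ hσ => hr σ (hpT σ hσ)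
  rw [hpa] at hp' hp'a
  have hclosed : Closed u (q ++ m ++ (p.map r).reverse) :=
    ⟨by simp [stepwiseEffective_append, hq.1, hqa, hm, hp'], by simp [hqa, hp'a]⟩
  have hvac := hM.vacuous (by grind) hclosed
  have hτL := hvac.mem_of_isReverse (hr τ (hpT τ hτp)).symm
    (List.mem_append_right _ (List.mem_reverse.2 (List.mem_map_of_mem hτp)))
  simp only [List.mem_append, List.mem_reverse, List.mem_map] at hτL
  rcases hτL with (hτq | hτm) | ⟨κ, hκ, rfl⟩
  · exact .inl ⟨u, q, hqT, hq, hqa, hτq⟩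
  · exact .inr hτm
  · exact absurd (hr κ (hpT κ hκ)) (hp.2.1 κ hκ _ hτp)

end IsMedium

end Media

theorem content_diff_eq_message_content_general {S : Type u} {T : Set (S → S)}
    (hM : IsMedium T) (s v : S) (m : List (S → S))
    (hm : ∀ τ ∈ m, τ ∈ T) (hmc : Concise s m) (hsm : apply s m = v) :
    stateContent T v \ stateContent T s = {τ | τ ∈ m} := by
  subst hsm
  ext τ
  constructor
  · rintro ⟨hv, hs⟩
    exact (hM.mem_stateContent_or_mem hm hmc.1 hv).resolve_left hs
  · intro hτ
    exact ⟨⟨s, m, hm, hmc, rfl, hτ⟩, hM.notMem_stateContent_of_mem hm hmc hτ⟩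

/-- Theorem 8.2: if `s` and `v` are distinct states with `s·m = v` for a concise
message `m`, then `v̂ \ ŝ = C(m)`. -/
theorem content_diff_eq_message_content {S : Type u} {T : Set (S → S)}
    (hM : IsMedium T) (s v : S) (hsv : s ≠ v) (m : List (S → S))
    (hm : ∀ τ ∈ m, τ ∈ T) (hmc : Concise s m) (hsm : apply s m = v) :
    stateContent T v \ stateContent T s = {τ | τ ∈ m} :=
  content_diff_eq_message_content_general hM s v m hm hmc hsm
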